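/- Let p ≥ q ≥ 1 and N ≥ 1 be integers and n = p+q. Let γ ∈ Γ_G(N) = SU(p,q) ∩ (I_n + M_n(N·ℤ[i])), and suppose γ is not unitary (equivalently, γ ∉ K = SU(p,q) ∩ U(n)). Then ‖γ‖² ≥ 4N² + n, where ‖γ‖ = (tr(γ*γ))^{1/2} is the Frobenius norm. -/
import Mathlib


open Matrix

/-- The matrix `I_{p,q} = diag(I_p, −I_q)`. -/
def stmt4.Ipq (p q : ℕ) : Matrix (Fin p ⊕ Fin q) (Fin p ⊕ Fin q) ℂ :=
  Matrix.fromBlocks 1 0 0 (-1)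

/-- Membership in `Γ_G(N) = SU(p,q) ∩ (I_n + M_n(N·ℤ[i]))`. -/
def stmt4.inGamma (p q N : ℕ) (γ : Matrix (Fin p ⊕ Fin q) (Fin p ⊕ Fin q) ℂ) : Prop :=
  γ.det = 1 ∧ γᴴ * stmt4.Ipq p q * γ = stmt4.Ipq p q ∧
    ∀ i j, ∃ a b : ℤ, γ i j - (1 : Matrix (Fin p ⊕ Fin q) (Fin p ⊕ Fin q) ℂ) i j =
      (N : ℂ) * ((a : ℂ) + (b : ℂ) * Complex.I)

/-- The diagonal entries function of `I_{p,q}`. -/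
def stmt4d (p q : ℕ) : Fin p ⊕ Fin q → ℂ := Sum.elim (fun _ => 1) (fun _ => -1)

lemma stmt4_Ipq_eq_diag {p q : ℕ} : stmt4.Ipq p q = Matrix.diagonal (stmt4d p q) := by
  ext i j
  rcases i with i | i <;> rcases j with j | j <;>
    simp [stmt4.Ipq, stmt4d, Matrix.diagonal, Matrix.one_apply] <;>
    split_ifs <;> simp

lemma stmt4d_mul_self {p q : ℕ} (i : Fin p ⊕ Fin q) :
    stmt4d p q i * stmt4d p q i = 1 := by
  rcases i with i | i <;> simp [stmt4d]

set_option maxHeartbeats 1000000 in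
/-- If `γ ∈ Γ_G(N)` is not unitary, then `‖γ‖² = tr(γ*γ) ≥ 4N² + n`. -/
theorem stmt_4 (p q N : ℕ) (hq : 1 ≤ q) (hpq : q ≤ p) (hN : 1 ≤ N)
    (γ : Matrix (Fin p ⊕ Fin q) (Fin p ⊕ Fin q) ℂ)
    (hγ : stmt4.inGamma p q N γ)
    (hnotK : γ ∉ Matrix.unitaryGroup (Fin p ⊕ Fin q) ℂ) :
    ((γᴴ * γ).trace).re ≥ 4 * (N : ℝ) ^ 2 + ((p + q : ℕ) : ℝ) := by
  classical
  obtain ⟨hdet, hrel, hint⟩ := hγ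
  set d : Fin p ⊕ Fin q → ℂ := stmt4d p q with hd
  set e : Fin p ⊕ Fin q → ℝ := Sum.elim (fun _ => 1) (fun _ => -1) with he
  have hde : ∀ i, d i = ((e i : ℝ) : ℂ) := by
    intro i; rcases i with i | i <;> simp [hd, he, stmt4d]
  rw [stmt4_Ipq_eq_diag] at hrel
  set F : (Fin p ⊕ Fin q) → (Fin p ⊕ Fin q) → ℝ := fun i j => Complex.normSq (γ i j)
    with hF
  have hFnn : ∀ i j, 0 ≤ F i j := fun i j => Complex.normSq_nonneg _
  -- entrywise column relation
  have hcolC : ∀ i j, (∑ k, (starRingEnd ℂ) (γ k i) * d k * γ k j) =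
      Matrix.diagonal d i j := by
    intro i j
    calc (∑ k, (starRingEnd ℂ) (γ k i) * d k * γ k j)
        = ((γᴴ * Matrix.diagonal d) * γ) i j := by
          rw [Matrix.mul_apply]
          exact Finset.sum_congr rfl fun k _ => by
            rw [Matrix.mul_diagonal, Matrix.conjTranspose_apply, Complex.star_def]
      _ = Matrix.diagonal d i j := by rw [hrel]
  have hdd : Matrix.diagonal d * Matrix.diagonal d = 1 := by
    rw [Matrix.diagonal_mul_diagonal]
    convert Matrix.diagonal_one using 2
    funext i; exact stmt4d_mul_self i
  have hinv : (Matrix.diagonal d * γᴴ * Matrix.diagonal d) * γ = 1 := by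
    have h0 : Matrix.diagonal d * (γᴴ * Matrix.diagonal d * γ) = 1 := by
      rw [hrel, hdd]
    rw [← h0]; simp only [Matrix.mul_assoc]
  have hinv2 : γ * (Matrix.diagonal d * γᴴ * Matrix.diagonal d) = 1 :=
    mul_eq_one_comm.mp hinv
  have h3 : γ * (Matrix.diagonal d * γᴴ * Matrix.diagonal d) * Matrix.diagonal d
      = Matrix.diagonal d := by rw [hinv2, one_mul]
  have hrel2 : γ * Matrix.diagonal d * γᴴ = Matrix.diagonal d := by
    calc γ * Matrix.diagonal d * γᴴ
        = γ * Matrix.diagonal d * γᴴ * (Matrix.diagonal d * Matrix.diagonal d) := by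
          rw [hdd, Matrix.mul_one]
      _ = γ * (Matrix.diagonal d * γᴴ * Matrix.diagonal d) * Matrix.diagonal d := by
          simp only [Matrix.mul_assoc]
      _ = Matrix.diagonal d := h3
  have hrowC : ∀ i j, (∑ k, γ i k * d k * (starRingEnd ℂ) (γ j k)) =
      Matrix.diagonal d i j := by
    intro i j
    calc (∑ k, γ i k * d k * (starRingEnd ℂ) (γ j k))
        = ((γ * Matrix.diagonal d) * γᴴ) i j := by
          rw [Matrix.mul_apply]
          exact Finset.sum_congr rfl fun k _ => by
            rw [Matrix.mul_diagonal, Matrix.conjTranspose_apply, Complex.star_def]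
      _ = Matrix.diagonal d i j := by rw [hrel2]
  -- real column identity
  have hcol : ∀ j, (∑ i, e i * F i j) = e j := by
    intro j
    have hterm : ∀ i, ((e i * F i j : ℝ) : ℂ) = (starRingEnd ℂ) (γ i j) * d i * γ i j := by
      intro i
      show ((e i * Complex.normSq (γ i j) : ℝ) : ℂ) = _
      rw [Complex.ofReal_mul, Complex.normSq_eq_conj_mul_self, hde i]
      ring
    have h2 : ((∑ i, e i * F i j : ℝ) : ℂ) = ((e j : ℝ) : ℂ) := by
      rw [Complex.ofReal_sum, Finset.sum_congr rfl fun i _ => hterm i,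
        hcolC j j, Matrix.diagonal_apply_eq, hde j]
    exact_mod_cast h2
  have hrow : ∀ i, (∑ j, e j * F i j) = e i := by
    intro i
    have hterm : ∀ j, ((e j * F i j : ℝ) : ℂ) = γ i j * d j * (starRingEnd ℂ) (γ i j) := by
      intro j
      show ((e j * Complex.normSq (γ i j) : ℝ) : ℂ) = _
      rw [Complex.ofReal_mul, Complex.normSq_eq_conj_mul_self, hde j]
      ring
    have h2 : ((∑ j, e j * F i j : ℝ) : ℂ) = ((e i : ℝ) : ℂ) := by
      rw [Complex.ofReal_sum, Finset.sum_congr rfl fun j _ => hterm j,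
        hrowC i i, Matrix.diagonal_apply_eq, hde i]
    exact_mod_cast h2
  -- block sums
  set A : ℝ := ∑ a : Fin p, ∑ b : Fin p, F (Sum.inl a) (Sum.inl b) with hA
  set B : ℝ := ∑ a : Fin p, ∑ b : Fin q, F (Sum.inl a) (Sum.inr b) with hB
  set C : ℝ := ∑ a : Fin q, ∑ b : Fin p, F (Sum.inr a) (Sum.inl b) with hC
  set D : ℝ := ∑ a : Fin q, ∑ b : Fin q, F (Sum.inr a) (Sum.inr b) with hD
  have hsplit : ∀ j, (∑ i, e i * F i j) =
      (∑ a : Fin p, F (Sum.inl a) j) - (∑ a : Fin q, F (Sum.inr a) j) := by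
    intro j
    rw [Fintype.sum_sum_type]
    simp only [he, Sum.elim_inl, Sum.elim_inr, one_mul, neg_one_mul,
      Finset.sum_neg_distrib, sub_eq_add_neg]
  have hsplit' : ∀ i, (∑ j, e j * F i j) =
      (∑ b : Fin p, F i (Sum.inl b)) - (∑ b : Fin q, F i (Sum.inr b)) := by
    intro i
    rw [Fintype.sum_sum_type]
    simp only [he, Sum.elim_inl, Sum.elim_inr, one_mul, neg_one_mul,
      Finset.sum_neg_distrib, sub_eq_add_neg]
  have e1 : A - C = p := by
    have h : ∑ b : Fin p, (∑ i, e i * F i (Sum.inl b)) = (p : ℝ) := by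
      rw [Finset.sum_congr rfl fun b _ => hcol (Sum.inl b)]
      simp [he]
    rw [Finset.sum_congr rfl fun b _ => hsplit (Sum.inl b), Finset.sum_sub_distrib] at h
    have hc1 : (∑ b : Fin p, ∑ a : Fin p, F (Sum.inl a) (Sum.inl b)) = A := by
      rw [hA]; exact Finset.sum_comm
    have hc2 : (∑ b : Fin p, ∑ a : Fin q, F (Sum.inr a) (Sum.inl b)) = C := by
      rw [hC]; exact Finset.sum_comm
    rw [hc1, hc2] at h
    exact h
  have e2 : B - D = -q := by
    have h : ∑ b : Fin q, (∑ i, e i * F i (Sum.inr b)) = -(q : ℝ) := by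
      rw [Finset.sum_congr rfl fun b _ => hcol (Sum.inr b)]
      simp [he]
    rw [Finset.sum_congr rfl fun b _ => hsplit (Sum.inr b), Finset.sum_sub_distrib] at h
    have hc1 : (∑ b : Fin q, ∑ a : Fin p, F (Sum.inl a) (Sum.inr b)) = B := by
      rw [hB]; exact Finset.sum_comm
    have hc2 : (∑ b : Fin q, ∑ a : Fin q, F (Sum.inr a) (Sum.inr b)) = D := by
      rw [hD]; exact Finset.sum_comm
    rw [hc1, hc2] at h
    exact h
  have e3 : A - B = p := by
    have h : ∑ a : Fin p, (∑ j, e j * F (Sum.inl a) j) = (p : ℝ) := by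
      rw [Finset.sum_congr rfl fun a _ => hrow (Sum.inl a)]
      simp [he]
    rw [Finset.sum_congr rfl fun a _ => hsplit' (Sum.inl a), Finset.sum_sub_distrib] at h
    rw [← hA, ← hB] at h
    exact h
  have e4 : C - D = -q := by
    have h : ∑ a : Fin q, (∑ j, e j * F (Sum.inr a) j) = -(q : ℝ) := by
      rw [Finset.sum_congr rfl fun a _ => hrow (Sum.inr a)]
      simp [he]
    rw [Finset.sum_congr rfl fun a _ => hsplit' (Sum.inr a), Finset.sum_sub_distrib] at h
    rw [← hC, ← hD] at h
    exact h
  -- trace formula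
  have htr : ((γᴴ * γ).trace).re = A + B + C + D := by
    have h1 : (γᴴ * γ).trace = ∑ j, ∑ i, ((F i j : ℝ) : ℂ) := by
      rw [Matrix.trace]
      refine Finset.sum_congr rfl fun j _ => ?_
      rw [Matrix.diag_apply, Matrix.mul_apply]
      refine Finset.sum_congr rfl fun i _ => ?_
      rw [Matrix.conjTranspose_apply, Complex.star_def]
      exact (Complex.normSq_eq_conj_mul_self).symm
    rw [h1]
    have h2 : (∑ j, ∑ i, ((F i j : ℝ) : ℂ)) = ((∑ j, ∑ i, F i j : ℝ) : ℂ) := by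
      rw [Complex.ofReal_sum]
      exact Finset.sum_congr rfl fun j _ => (Complex.ofReal_sum _ _).symm
    rw [h2, Complex.ofReal_re, Finset.sum_comm]
    rw [Fintype.sum_sum_type]
    rw [Finset.sum_congr rfl fun (a : Fin p) _ =>
      Fintype.sum_sum_type (fun j => F (Sum.inl a) j)]
    rw [Finset.sum_congr rfl fun (a : Fin q) _ =>
      Fintype.sum_sum_type (fun j => F (Sum.inr a) j)]
    rw [Finset.sum_add_distrib, Finset.sum_add_distrib, ← hA, ← hB, ← hC, ← hD]
    ring
  -- existence of a nonzero off-block entry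
  have key : (∃ a b, γ (Sum.inl a) (Sum.inr b) ≠ 0) ∨
      (∃ b a, γ (Sum.inr b) (Sum.inl a) ≠ 0) := by
    by_contra hcon
    push_neg at hcon
    obtain ⟨h12, h21⟩ := hcon
    apply hnotK
    rw [Matrix.mem_unitaryGroup_iff']
    ext i j
    rw [Matrix.star_eq_conjTranspose, Matrix.mul_apply]
    have hterm : ∀ k, γᴴ i k * γ k j =
        ((starRingEnd ℂ) (γ k i) * d k * γ k j) * d j := by
      intro k
      rw [Matrix.conjTranspose_apply, Complex.star_def]
      rcases k with k | k <;> rcases j with j | j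
      · simp [hd, stmt4d]
      · simp [h12 k j]
      · simp [h21 k j]
      · simp only [hd, stmt4d, Sum.elim_inr]; ring
    calc (∑ k, γᴴ i k * γ k j)
        = ∑ k, ((starRingEnd ℂ) (γ k i) * d k * γ k j) * d j :=
          Finset.sum_congr rfl fun k _ => hterm k
      _ = (∑ k, (starRingEnd ℂ) (γ k i) * d k * γ k j) * d j := by
          rw [Finset.sum_mul]
      _ = Matrix.diagonal d i j * d j := by rw [hcolC]
      _ = (1 : Matrix (Fin p ⊕ Fin q) (Fin p ⊕ Fin q) ℂ) i j := by
          by_cases hij : i = j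
          · subst hij
            rw [Matrix.diagonal_apply_eq, Matrix.one_apply_eq]
            exact stmt4d_mul_self i
          · rw [Matrix.diagonal_apply_ne _ hij, Matrix.one_apply_ne hij, zero_mul]
  -- the nonzero entry has normSq ≥ N²
  have hFbig : ∀ i j, i ≠ j → γ i j ≠ 0 → (N : ℝ) ^ 2 ≤ F i j := by
    intro i j hij hne
    obtain ⟨a, b, hab⟩ := hint i j
    rw [Matrix.one_apply_ne hij, sub_zero] at hab
    have habne : (a : ℂ) + (b : ℂ) * Complex.I ≠ 0 := by
      intro h0; apply hne; rw [hab, h0, mul_zero]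
    have hab0 : a ≠ 0 ∨ b ≠ 0 := by
      by_contra h
      push_neg at h
      obtain ⟨ha, hb⟩ := h
      apply habne; rw [ha, hb]; simp
    have h1 : (1 : ℝ) ≤ (a : ℝ) ^ 2 + (b : ℝ) ^ 2 := by
      have h0 : (1 : ℤ) ≤ a ^ 2 + b ^ 2 := by
        rcases hab0 with h | h
        · have := Int.one_le_abs h
          nlinarith [sq_abs a, sq_nonneg b, abs_nonneg a]
        · have := Int.one_le_abs h
          nlinarith [sq_abs b, sq_nonneg a, abs_nonneg b]
      exact_mod_cast h0
    have hFval : F i j = (N : ℝ) ^ 2 * ((a : ℝ) ^ 2 + (b : ℝ) ^ 2) := by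
      show Complex.normSq (γ i j) = _
      rw [hab, Complex.normSq_mul]
      have h2 : Complex.normSq ((a : ℂ) + (b : ℂ) * Complex.I) =
          (a : ℝ) ^ 2 + (b : ℝ) ^ 2 := by
        rw [Complex.normSq_apply]
        simp
        ring
      rw [h2, Complex.normSq_natCast]
      ring
    rw [hFval]
    nlinarith [sq_nonneg ((N : ℝ))]
  -- conclude
  have hBC : B = C := by linarith
  have hBbig : (N : ℝ) ^ 2 ≤ B := by
    rcases key with ⟨a, b, hne⟩ | ⟨b, a, hne⟩
    · have h1 : F (Sum.inl a) (Sum.inr b) ≤ B := by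
        rw [hB]
        calc F (Sum.inl a) (Sum.inr b)
            ≤ ∑ b' : Fin q, F (Sum.inl a) (Sum.inr b') :=
              Finset.single_le_sum (fun i _ => hFnn _ _) (Finset.mem_univ b)
          _ ≤ ∑ a' : Fin p, ∑ b' : Fin q, F (Sum.inl a') (Sum.inr b') :=
              Finset.single_le_sum
                (f := fun a' : Fin p => ∑ b' : Fin q, F (Sum.inl a') (Sum.inr b'))
                (fun i _ => Finset.sum_nonneg fun j _ => hFnn _ _) (Finset.mem_univ a)
      have h2 := hFbig (Sum.inl a) (Sum.inr b) (by simp) hne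
      linarith
    · have h1 : F (Sum.inr b) (Sum.inl a) ≤ C := by
        rw [hC]
        calc F (Sum.inr b) (Sum.inl a)
            ≤ ∑ a' : Fin p, F (Sum.inr b) (Sum.inl a') :=
              Finset.single_le_sum (fun i _ => hFnn _ _) (Finset.mem_univ a)
          _ ≤ ∑ b' : Fin q, ∑ a' : Fin p, F (Sum.inr b') (Sum.inl a') :=
              Finset.single_le_sum
                (f := fun b' : Fin q => ∑ a' : Fin p, F (Sum.inr b') (Sum.inl a'))
                (fun i _ => Finset.sum_nonneg fun j _ => hFnn _ _) (Finset.mem_univ b)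
      have h2 := hFbig (Sum.inr b) (Sum.inl a) (by simp) hne
      linarith
  rw [htr]
  push_cast
  linarith
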